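/- Let d ≥ 1, n ≥ 2d−1, and let (p(v))_{v∈Σ^n} be a family of nonnegative reals; extend p to all strings u with |u| < n by p(u) := Σ_{v∈Σ^{n−|u|}} p(uv). Then there exist matrices T_a ∈ ℂ^{d×d} (a ∈ Σ) and vectors x, y ∈ ℂ^d with yᵀ(Σ_{a∈Σ} T_a) = yᵀ such that p(v = a_1…a_n) = yᵀ T_{a_n}···T_{a_1} x for all v ∈ Σ^n, if and only if the following two conditions hold: (a) rank 𝒫_{p,d−1,d−1} ≤ d, equivalently det [p(w_j v_i)]_{1≤i,j≤d+1} = 0 for all choices of strings v_1,…,v_{d+1}, w_1,…,w_{d+1} of length at most d−1; (b) rank 𝒫_{p,⌈n/2⌉,⌊n/2⌋} = rank 𝒫_{p,⌊n/2⌋,⌈n/2⌉} = rank 𝒫_{p,d−1,d−1}. -/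

import Mathlib

/-!
If `p(v) = yᵀ T_v x` for `|v| = n`, the condition `yᵀ (∑ₐ Tₐ) = yᵀ` propagates this formula to all
shorter words, so `𝒫_{p,s,t}` (for `s + t ≤ n`) is the matrix of the pairing between the
observable vectors `yᵀ T_v` (`|v| ≤ s`) and the reachable vectors `T_w x` (`|w| ≤ t`). Both spans
are Krylov spaces in a `d`-dimensional space, hence stabilize from length `d - 1` on; so all these
ranks agree for `s, t ≥ d - 1` and are at most `d`.

Conversely, the rank conditions say that restricting rows of length `≤ ⌈n/2⌉` to rows of length
`≤ d - 1` is injective on the columns of words of length `≤ ⌊n/2⌋`, and that the column space `V`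
of `𝒫_{p,d-1,d-1}` already contains the columns of all words of length `≤ ⌈n/2⌉`. Inverting the
restriction and shifting rows by a letter gives operators `Tₐ` on `V` with `Tₐ c_w = c_{wa}`.
With `x = c_□` and `y` the evaluation at `□`, `yᵀ T_v x = p(v)`, and the marginalisation rule
gives `yᵀ (∑ₐ Tₐ) = yᵀ`; embedding `V` into `ℂ^d` gives matrices. A real matrix has the same rank
over `ℂ`, so nothing depends on the field.
-/
open Matrix

/-- The rank of the finite Hankel submatrix `𝒫_{p,n,m} = [p(wv)]_{|v|≤n, |w|≤m}`,
i.e. the dimension of the span of its columns (functions on row-strings of length `≤ n`). -/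
noncomputable def hankelRank {A : Type*} (p : List A → ℝ) (n m : ℕ) : Cardinal :=
  Module.rank ℝ ↥(Submodule.span ℝ (Set.range
    fun w : {w : List A // w.length ≤ m} =>
      fun v : {v : List A // v.length ≤ n} => p (w.1 ++ v.1)))

/-- For `v = a₁…aₙ`, the product `T_{aₙ} ⋯ T_{a₁}`. -/
def wordProd {A R : Type*} [Semiring R] {d : ℕ}
    (T : A → Matrix (Fin d) (Fin d) R) (v : List A) : Matrix (Fin d) (Fin d) R :=
  (v.reverse.map T).prod

open Module Submodule Set

abbrev WordsLE (A : Type*) (s : ℕ) := {v : List A // v.length ≤ s}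

instance {A : Type*} [Finite A] (s : ℕ) : Finite (WordsLE A s) :=
  (List.finite_length_le A s).to_subtype

def WordsLE.nil (A : Type*) (s : ℕ) : WordsLE A s := ⟨[], Nat.zero_le s⟩

theorem range_comp_reverse {A X : Type*} (f : List A → X) (s : ℕ) :
    range (fun v : WordsLE A s => f v.1.reverse) = range (fun v : WordsLE A s => f v.1) := by
  ext z
  constructor <;> rintro ⟨⟨v, hv⟩, rfl⟩ <;> exact ⟨⟨v.reverse, by simpa using hv⟩, by simp⟩

section wordMul

variable {A M : Type*} [Monoid M] (T : A → M)

def wordMul (v : List A) : M := (v.reverse.map T).prod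

@[simp] theorem wordMul_nil : wordMul T [] = 1 := rfl

theorem wordMul_append (u v : List A) : wordMul T (u ++ v) = wordMul T v * wordMul T u := by
  simp [wordMul]

theorem wordMul_concat (u : List A) (a : A) : wordMul T (u ++ [a]) = T a * wordMul T u := by
  simp [wordMul]

theorem wordMul_cons (a : A) (u : List A) : wordMul T (a :: u) = wordMul T u * T a := by
  simp [wordMul]

theorem wordProd_eq_wordMul {R : Type*} [Semiring R] {d : ℕ}
    (T : A → Matrix (Fin d) (Fin d) R) (v : List A) : wordProd T v = wordMul T v := rfl

end wordMul

theorem Submodule.eq_of_monotone_of_finrank_le {K V : Type*} [DivisionRing K] [AddCommGroup V]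
    [Module K V] [FiniteDimensional K V] {W : ℕ → Submodule K V} (hmono : Monotone W)
    (hstall : ∀ t, W t = W (t + 1) → W (t + 1) = W (t + 2)) {k s : ℕ}
    (hk : finrank K V ≤ finrank K (W 0) + k) (hs : k ≤ s) : W s = W k := by
  have stays : ∀ t j, W t = W (t + 1) → W (t + j) = W (t + j + 1) := by
    intro t j h
    induction j with
    | zero => exact h
    | succ j ih => exact hstall _ ih
  have hstall_k : W k = W (k + 1) := by
    -- otherwise the chain grows strictly up to `k`, so `W k = ⊤`
    by_contra hne
    have grow : ∀ t ≤ k, finrank K (W 0) + t ≤ finrank K (W t) := by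
      intro t
      induction t with
      | zero => simp
      | succ t ih =>
        intro ht
        have hlt : W t < W (t + 1) := lt_of_le_of_ne (hmono t.le_succ) fun h =>
          hne (by simpa [show t + (k - t) = k by omega] using stays t (k - t) h)
        have := Submodule.finrank_lt_finrank_of_lt hlt
        have := ih (by omega)
        omega
    have htop : W k = ⊤ := Submodule.eq_top_of_finrank_eq
      (le_antisymm (Submodule.finrank_le _) (hk.trans (grow k le_rfl)))
    exact hne (htop.trans (top_unique (htop ▸ hmono k.le_succ)).symm)
  obtain ⟨j, rfl⟩ := Nat.exists_eq_add_of_le hs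
  induction j with
  | zero => rfl
  | succ j ih => rw [← add_assoc, ← stays k j hstall_k, ih (by omega)]

section reachable

variable {A K : Type*} [Field K] {d : ℕ}

def reachableSpace (T : A → Matrix (Fin d) (Fin d) K) (x : Fin d → K) (t : ℕ) :
    Submodule K (Fin d → K) :=
  span K (range fun w : WordsLE A t => wordProd T w.1 *ᵥ x)

variable (T : A → Matrix (Fin d) (Fin d) K) (x : Fin d → K)

theorem reachableSpace_succ (t : ℕ) :
    reachableSpace T x (t + 1) =
      span K {x} ⊔ ⨆ a, (reachableSpace T x t).map (T a).mulVecLin := by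
  apply le_antisymm
  · rw [reachableSpace, span_le]
    rintro _ ⟨⟨w, hw⟩, rfl⟩
    rcases List.eq_nil_or_concat' w with rfl | ⟨u, a, rfl⟩
    · exact mem_sup_left (subset_span (by simp [wordProd_eq_wordMul]))
    · refine mem_sup_right (mem_iSup_of_mem a ?_)
      dsimp only
      rw [wordProd_eq_wordMul, wordMul_concat, ← mulVec_mulVec]
      exact mem_map_of_mem (subset_span ⟨⟨u, by simp at hw; omega⟩, rfl⟩)
  · refine sup_le ?_ (iSup_le fun a => ?_)
    · rw [span_le, singleton_subset_iff]
      exact subset_span ⟨⟨[], by simp⟩, by simp [wordProd_eq_wordMul]⟩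
    · rw [map_le_iff_le_comap, reachableSpace, span_le]
      rintro _ ⟨⟨w, hw⟩, rfl⟩
      refine subset_span ⟨⟨w ++ [a], by simp; omega⟩, ?_⟩
      simp [wordProd_eq_wordMul, wordMul_concat, mulVec_mulVec]

theorem reachableSpace_mono : Monotone (reachableSpace T x) := fun _ _ h =>
  span_mono (by rintro _ ⟨w, rfl⟩; exact ⟨⟨w.1, w.2.trans h⟩, rfl⟩)

theorem reachableSpace_eq_of_le {t : ℕ} (ht : d - 1 ≤ t) :
    reachableSpace T x t = reachableSpace T x (d - 1) := by
  rcases eq_or_ne x 0 with rfl | hx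
  · have (t : ℕ) : reachableSpace T 0 t = ⊥ := span_eq_bot.2 (by rintro _ ⟨w, rfl⟩; simp)
    rw [this, this]
  refine Submodule.eq_of_monotone_of_finrank_le (reachableSpace_mono T x) (fun t h => ?_) ?_ ht
  · change _ = reachableSpace T x (t + 1 + 1)
    rw [reachableSpace_succ T x (t + 1), ← h, ← reachableSpace_succ]
    exact h
  have : span K {x} ≤ reachableSpace T x 0 := by
    rw [span_le, singleton_subset_iff]
    exact subset_span ⟨⟨[], le_rfl⟩, by simp [wordProd_eq_wordMul]⟩
  have := (finrank_span_singleton hx).symm.trans_le (Submodule.finrank_mono this)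
  rw [finrank_fin_fun]
  omega

theorem vecMul_wordProd (y : Fin d → K) (v : List A) :
    y ᵥ* wordProd T v = wordProd (fun a => (T a)ᵀ) v.reverse *ᵥ y := by
  rw [← mulVec_transpose, wordProd, wordProd, transpose_list_prod]
  simp [List.map_reverse, List.map_map, Function.comp_def]

theorem span_vecMul_wordProd (y : Fin d → K) (s : ℕ) :
    span K (range fun v : WordsLE A s => y ᵥ* wordProd T v.1) =
      reachableSpace (fun a => (T a)ᵀ) y s := by
  simp_rw [vecMul_wordProd]
  rw [range_comp_reverse (fun v => wordProd (fun a => (T a)ᵀ) v *ᵥ y), reachableSpace]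

end reachable

section pairing

variable {K : Type*} [Field K]

theorem LinearMap.finrank_map_eq_of_ker_eq {V W W' : Type*} [AddCommGroup V] [Module K V]
    [AddCommGroup W] [Module K W] [AddCommGroup W'] [Module K W'] {f : V →ₗ[K] W}
    {g : V →ₗ[K] W'} (h : LinearMap.ker f = LinearMap.ker g) (U : Submodule K V)
    [FiniteDimensional K U] : finrank K (U.map f) = finrank K (U.map g) := by
  have hf := LinearMap.finrank_range_add_finrank_ker (f.domRestrict U)
  have hg := LinearMap.finrank_range_add_finrank_ker (g.domRestrict U)
  rw [LinearMap.range_domRestrict, LinearMap.ker_domRestrict] at hf hg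
  rw [h] at hf
  omega

theorem Matrix.mem_ker_mulVecLin_of_iff_span_le {m ι : Type*} [Fintype m] (o : ι → m → K)
    (z : m → K) :
    z ∈ LinearMap.ker (of o).mulVecLin ↔
      span K (range o) ≤ LinearMap.ker ((dotProductBilin K K).flip z) := by
  simp [span_le, range_subset_iff, funext_iff, mulVec]

theorem Matrix.ker_mulVecLin_of_eq {m ι ι' : Type*} [Fintype m] {o : ι → m → K}
    {o' : ι' → m → K} (h : span K (range o) = span K (range o')) :
    LinearMap.ker (of o).mulVecLin = LinearMap.ker (of o').mulVecLin := by
  ext z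
  rw [mem_ker_mulVecLin_of_iff_span_le, mem_ker_mulVecLin_of_iff_span_le, h]

end pairing

theorem finrank_span_range_algebraMap_comp {F L ι ι' : Type*} [Field F] [Field L] [Algebra F L]
    [Finite ι'] (v : ι → ι' → F) :
    finrank L (span L (range fun i => algebraMap F L ∘ v i)) = finrank F (span F (range v)) := by
  obtain ⟨κ, a, -, hspan, hli⟩ := exists_linearIndependent' F v
  have : Finite κ := hli.finite
  have : Fintype κ := Fintype.ofFinite κ
  let φ : (ι' → F) →ₗ[F] (ι' → L) := (Algebra.linearMap F L).compLeft ι'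
  have hspanL : span L (range fun i => algebraMap F L ∘ v i) =
      span L (range fun k => algebraMap F L ∘ v (a k)) := by
    refine le_antisymm (span_le.2 ?_)
      (span_mono (range_comp_subset_range a fun i => algebraMap F L ∘ v i))
    rintro _ ⟨i, rfl⟩
    have hi : v i ∈ span F (range (v ∘ a)) := hspan ▸ subset_span (mem_range_self i)
    have := mem_map_of_mem (f := φ) hi
    rw [map_span, ← range_comp] at this
    exact span_le_restrictScalars F L _ this
  rw [hspanL, ← hspan, finrank_span_eq_card hli]
  exact finrank_span_eq_card (linearIndependent_algebraMap_comp_iff.2 hli)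

section hankel

variable {A F : Type*} [Field F]

def hankelCol {R : Type*} (p : List A → R) (s : ℕ) (w : List A) : WordsLE A s → R :=
  fun v => p (w ++ v.1)

variable (F) in
def hankelSpan (p : List A → F) (s t : ℕ) : Submodule F (WordsLE A s → F) :=
  span F (range fun w : WordsLE A t => hankelCol p s w.1)

theorem hankelRank_eq_finrank [Finite A] (p : List A → ℝ) (s t : ℕ) :
    hankelRank p s t = finrank ℝ (hankelSpan ℝ p s t) :=
  (finrank_eq_rank ℝ _).symm

def restrictWords {s s' : ℕ} (h : s ≤ s') : (WordsLE A s' → F) →ₗ[F] (WordsLE A s → F) :=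
  LinearMap.funLeft F F fun v => ⟨v.1, v.2.trans h⟩

variable (p : List A → F)

theorem hankelCol_mem_hankelSpan {s t : ℕ} {w : List A} (hw : w.length ≤ t) :
    hankelCol p s w ∈ hankelSpan F p s t :=
  subset_span ⟨⟨w, hw⟩, rfl⟩

theorem hankelSpan_mono_right (s : ℕ) {t t' : ℕ} (h : t ≤ t') :
    hankelSpan F p s t ≤ hankelSpan F p s t' :=
  span_le.2 (by rintro _ ⟨w, rfl⟩; exact hankelCol_mem_hankelSpan p (w.2.trans h))

theorem restrictWords_hankelCol {s s' : ℕ} (h : s ≤ s') (w : List A) :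
    restrictWords h (hankelCol p s' w) = hankelCol p s w := rfl

theorem map_restrictWords_hankelSpan {s s' : ℕ} (h : s ≤ s') (t : ℕ) :
    (hankelSpan F p s' t).map (restrictWords h) = hankelSpan F p s t := by
  rw [hankelSpan, map_span, ← range_comp]
  rfl

theorem finrank_hankelSpan_mono [Finite A] {s s' t t' : ℕ} (hs : s ≤ s') (ht : t ≤ t') :
    finrank F (hankelSpan F p s t) ≤ finrank F (hankelSpan F p s' t') := by
  rw [← map_restrictWords_hankelSpan p hs]
  exact (finrank_map_le _ _).trans (Submodule.finrank_mono (hankelSpan_mono_right p s' ht))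

theorem finrank_hankelSpan_algebraMap_comp (L : Type*) [Field L] [Algebra F L] [Finite A]
    (s t : ℕ) :
    finrank L (hankelSpan L (algebraMap F L ∘ p) s t) = finrank F (hankelSpan F p s t) :=
  finrank_span_range_algebraMap_comp _

end hankel

section sumRule

variable {A R : Type*} [Fintype A] [AddCommMonoid R] {n : ℕ} {p : List A → R}

theorem eq_sum_append_singleton
    (hext : ∀ u : List A, u.length < n → p u = ∑ f : Fin (n - u.length) → A, p (u ++ List.ofFn f))
    {u : List A} (hu : u.length < n) : p u = ∑ a, p (u ++ [a]) := by
  obtain ⟨k, hk⟩ : ∃ k, n - u.length = k + 1 := ⟨n - u.length - 1, by omega⟩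
  have hlong (a : A) : p (u ++ [a]) = ∑ f : Fin k → A, p (u ++ a :: List.ofFn f) := by
    rcases Nat.lt_or_ge (u.length + 1) n with h | h
    · have h' := hext (u ++ [a]) (by simpa using h)
      rw [show n - (u ++ [a]).length = k by simp; omega] at h'
      simpa using h'
    · obtain rfl : k = 0 := by omega
      simp
  rw [hext u hu, hk, ← (Fin.consEquiv fun _ => A).sum_comp, Fintype.sum_prod_type]
  simp [Fin.consEquiv, hlong]

end sumRule

section forward

variable {A K : Type*} [Fintype A] [Field K] {d n : ℕ} {q : List A → K}
  {T : A → Matrix (Fin d) (Fin d) K} {x y : Fin d → K}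

theorem eq_dotProduct_wordProd_of_length_le (hy : y ᵥ* ∑ a, T a = y)
    (hq : ∀ u : List A, u.length < n → q u = ∑ a, q (u ++ [a]))
    (hp : ∀ v : List A, v.length = n → q v = y ⬝ᵥ wordProd T v *ᵥ x)
    {u : List A} (hu : u.length ≤ n) : q u = y ⬝ᵥ wordProd T u *ᵥ x := by
  induction h : n - u.length generalizing u with
  | zero => exact hp u (by omega)
  | succ k ih =>
    calc q u = ∑ a, q (u ++ [a]) := hq u (by omega)
      _ = ∑ a, y ⬝ᵥ T a *ᵥ (wordProd T u *ᵥ x) := by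
        refine Finset.sum_congr rfl fun a _ => ?_
        rw [ih (by simp; omega) (by simp; omega), wordProd_eq_wordMul, wordProd_eq_wordMul,
          wordMul_concat, mulVec_mulVec]
      _ = (y ᵥ* ∑ a, T a) ⬝ᵥ (wordProd T u *ᵥ x) := by
        rw [← dotProduct_mulVec, sum_mulVec, dotProduct_sum]
      _ = y ⬝ᵥ wordProd T u *ᵥ x := by rw [hy]

theorem hankelSpan_eq_map_reachableSpace (hy : y ᵥ* ∑ a, T a = y)
    (hq : ∀ u : List A, u.length < n → q u = ∑ a, q (u ++ [a]))
    (hp : ∀ v : List A, v.length = n → q v = y ⬝ᵥ wordProd T v *ᵥ x) {s t : ℕ} (hst : s + t ≤ n) :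
    hankelSpan K q s t =
      (reachableSpace T x t).map (of fun v : WordsLE A s => y ᵥ* wordProd T v.1).mulVecLin := by
  rw [hankelSpan, reachableSpace, map_span, ← range_comp]
  congr 2
  funext w v
  have hlen : (w.1 ++ v.1).length ≤ n := by simp; have := w.2; have := v.2; omega
  simp only [hankelCol, Function.comp_apply, mulVecLin_apply,
    eq_dotProduct_wordProd_of_length_le hy hq hp hlen, wordProd_eq_wordMul, wordMul_append,
    ← mulVec_mulVec]
  rw [dotProduct_mulVec]
  rfl

theorem finrank_hankelSpan_of_realization (hy : y ᵥ* ∑ a, T a = y)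
    (hq : ∀ u : List A, u.length < n → q u = ∑ a, q (u ++ [a]))
    (hp : ∀ v : List A, v.length = n → q v = y ⬝ᵥ wordProd T v *ᵥ x) (hdn : 2 * (d - 1) ≤ n) :
    finrank K (hankelSpan K q (d - 1) (d - 1)) ≤ d ∧
      ∀ s t, d - 1 ≤ s → d - 1 ≤ t → s + t ≤ n →
        finrank K (hankelSpan K q s t) = finrank K (hankelSpan K q (d - 1) (d - 1)) := by
  refine ⟨?_, fun s t hs ht hst => ?_⟩
  · rw [hankelSpan_eq_map_reachableSpace hy hq hp (by omega)]
    exact (finrank_map_le _ _).trans ((Submodule.finrank_le _).trans_eq (finrank_fin_fun K))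
  · rw [hankelSpan_eq_map_reachableSpace hy hq hp hst,
      hankelSpan_eq_map_reachableSpace hy hq hp (by omega), reachableSpace_eq_of_le T x ht]
    refine LinearMap.finrank_map_eq_of_ker_eq (ker_mulVecLin_of_eq ?_) _
    rw [span_vecMul_wordProd, span_vecMul_wordProd, reachableSpace_eq_of_le _ _ hs]

end forward

section transport

variable {A F W : Type*} [Field F] [AddCommGroup W] [Module F W]

theorem coe_wordMul_restrict {V : Submodule F W} {T : A → Module.End F W}
    (hT : ∀ a, ∀ g ∈ V, T a g ∈ V) (v : List A) (g : V) :
    (wordMul (fun a => (T a).restrict (hT a)) v g : W) = wordMul T v g := by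
  induction v using List.reverseRecOn with
  | nil => rfl
  | append_singleton v a ih => simp [wordMul_concat, ih]

theorem exists_matrix_realization_of_finrank_le [Fintype A] [FiniteDimensional F W] {d : ℕ}
    (hW : finrank F W ≤ d) (T : A → Module.End F W) (x : W) (φ : Module.Dual F W)
    (hφ : ∀ g, ∑ a, φ (T a g) = φ g) :
    ∃ (M : A → Matrix (Fin d) (Fin d) F) (x' y' : Fin d → F),
      y' ᵥ* ∑ a, M a = y' ∧ ∀ v, φ (wordMul T v x) = y' ⬝ᵥ wordProd M v *ᵥ x' := by
  obtain ⟨ι, hι⟩ := finrank_le_iff_exists_linearMap.1 (hW.trans_eq (finrank_fin_fun F).symm)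
  obtain ⟨π, hπ⟩ := ι.exists_leftInverse_of_injective (LinearMap.ker_eq_bot.2 hι)
  have hπι (g : W) : π (ι g) = g := LinearMap.congr_fun hπ g
  set M : A → Matrix (Fin d) (Fin d) F := fun a => LinearMap.toMatrix' (ι ∘ₗ T a ∘ₗ π)
  have hM (a : A) (u : Fin d → F) : M a *ᵥ u = ι (T a (π u)) := LinearMap.toMatrix'_mulVec _ u
  have hword (v : List A) (g : W) : wordProd M v *ᵥ ι g = ι (wordMul T v g) := by
    induction v using List.reverseRecOn with
    | nil => simp [wordProd_eq_wordMul]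
    | append_singleton v a ih =>
      rw [wordProd_eq_wordMul, wordMul_concat, ← mulVec_mulVec, ← wordProd_eq_wordMul, ih, hM,
        hπι, wordMul_concat, Module.End.mul_apply]
  set y' := (dotProductEquiv F (Fin d)).symm (φ ∘ₗ π)
  have hy' (u : Fin d → F) : y' ⬝ᵥ u = φ (π u) := by
    rw [← dotProductEquiv_apply_apply, LinearEquiv.apply_symm_apply, LinearMap.comp_apply]
  refine ⟨M, ι x, y', ?_, fun v => by rw [hword, hy', hπι]⟩
  ext i
  calc (y' ᵥ* ∑ a, M a) i = (y' ᵥ* ∑ a, M a) ⬝ᵥ Pi.single i 1 :=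
        (dotProduct_single_one _ _).symm
    _ = y' ⬝ᵥ Pi.single i 1 := by
      rw [← dotProduct_mulVec, sum_mulVec, dotProduct_sum]
      simp_rw [hy', hM, hπι, hφ]
    _ = y' i := dotProduct_single_one _ _

end transport

section flat

variable {A F : Type*} [Field F]

def shiftWords {s s' : ℕ} (a : A) (h : s + 1 ≤ s') :
    (WordsLE A s' → F) →ₗ[F] (WordsLE A s → F) :=
  LinearMap.funLeft F F fun v => ⟨a :: v.1, by have := v.2; simp; omega⟩

theorem shiftWords_hankelCol (p : List A → F) {s s' : ℕ} (a : A) (h : s + 1 ≤ s') (w : List A) :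
    shiftWords a h (hankelCol p s' w) = hankelCol p s (w ++ [a]) := by
  ext v
  simp [shiftWords, hankelCol]

/-- "Flat" as in rank-preserving: such an `ext` exists when `𝒫_{q,⌈n/2⌉,⌊n/2⌋}` has the rank of
its `k × k` corner. -/
structure FlatExtension (q : List A → F) (k n : ℕ) where
  two_mul_add_one_le : 2 * k + 1 ≤ n
  hankelSpan_le : hankelSpan F q k ((n + 1) / 2) ≤ hankelSpan F q k k
  ext : (WordsLE A k → F) →ₗ[F] (WordsLE A ((n + 1) / 2) → F)
  ext_hankelCol :
    ∀ w : List A, w.length ≤ n / 2 → ext (hankelCol q k w) = hankelCol q ((n + 1) / 2) w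

namespace FlatExtension

variable {q : List A → F} {k n : ℕ}

theorem le_half (E : FlatExtension q k n) : k ≤ n / 2 := by
  have := E.two_mul_add_one_le; omega

theorem succ_le_half (E : FlatExtension q k n) : k + 1 ≤ (n + 1) / 2 := by
  have := E.two_mul_add_one_le; omega

theorem hankelCol_mem (E : FlatExtension q k n) {w : List A} (hw : w.length ≤ (n + 1) / 2) :
    hankelCol q k w ∈ hankelSpan F q k k :=
  E.hankelSpan_le (hankelCol_mem_hankelSpan q hw)

variable (E : FlatExtension q k n)

def shift (a : A) : Module.End F (WordsLE A k → F) := shiftWords a E.succ_le_half ∘ₗ E.ext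

theorem shift_hankelCol (a : A) {w : List A} (hw : w.length ≤ n / 2) :
    E.shift a (hankelCol q k w) = hankelCol q k (w ++ [a]) := by
  simp [shift, E.ext_hankelCol w hw, shiftWords_hankelCol]

theorem restrictWords_ext {g : WordsLE A k → F} (hg : g ∈ hankelSpan F q k (n / 2)) :
    restrictWords (Nat.le_of_succ_le E.succ_le_half) (E.ext g) = g := by
  refine LinearMap.eqOn_span (f := restrictWords (Nat.le_of_succ_le E.succ_le_half) ∘ₗ E.ext)
    (g := LinearMap.id) ?_ hg
  rintro _ ⟨w, rfl⟩
  simp [E.ext_hankelCol w w.2, restrictWords_hankelCol]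

theorem shift_mem (a : A) {g : WordsLE A k → F} (hg : g ∈ hankelSpan F q k k) :
    E.shift a g ∈ hankelSpan F q k k := by
  refine (span_le (p := (hankelSpan F q k k).comap (E.shift a))).2 ?_ hg
  rintro _ ⟨w, rfl⟩
  rw [SetLike.mem_coe, mem_comap, E.shift_hankelCol a (w.2.trans E.le_half)]
  exact E.hankelCol_mem (by have := w.2; have := E.succ_le_half; simp; omega)

theorem ext_shift (a : A) {g : WordsLE A k → F} (hg : g ∈ hankelSpan F q k k) {u : List A}
    (hu : u.length + 1 ≤ (n + 1) / 2) :
    E.ext (E.shift a g) ⟨u, by omega⟩ = E.ext g ⟨a :: u, by simpa using hu⟩ := by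
  refine LinearMap.eqOn_span (f := LinearMap.proj ⟨u, by omega⟩ ∘ₗ E.ext ∘ₗ E.shift a)
    (g := LinearMap.proj ⟨a :: u, by simpa using hu⟩ ∘ₗ E.ext) ?_ hg
  rintro _ ⟨⟨w, hw⟩, rfl⟩
  have hwm : w.length ≤ n / 2 := hw.trans E.le_half
  simp only [LinearMap.comp_apply, LinearMap.proj_apply, E.shift_hankelCol a hwm,
    E.ext_hankelCol w hwm]
  rcases Nat.lt_or_ge (n / 2) (w.length + 1) with hlong | hshort
  · -- `w ++ [a]` is too long for `ext_hankelCol`, but then `u` is a row of the `k × k` corner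
    have := E.le_half
    have := E.succ_le_half
    have hmem : hankelCol q k (w ++ [a]) ∈ hankelSpan F q k (n / 2) :=
      hankelSpan_mono_right q k E.le_half (E.hankelCol_mem (by simp; omega))
    have := congrFun (E.restrictWords_ext hmem) ⟨u, by omega⟩
    simpa [restrictWords, hankelCol] using this
  · rw [E.ext_hankelCol (w ++ [a]) (by simp; omega)]
    simp [hankelCol]

theorem wordMul_shift_apply_nil {g : WordsLE A k → F} (hg : g ∈ hankelSpan F q k k) {u : List A}
    (hu : u.length ≤ (n + 1) / 2) : wordMul E.shift u g (WordsLE.nil A k) = E.ext g ⟨u, hu⟩ := by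
  induction u generalizing g with
  | nil =>
    have hg' := hankelSpan_mono_right q k E.le_half hg
    exact (congrFun (E.restrictWords_ext hg') (WordsLE.nil A k)).symm
  | cons a u ih =>
    rw [wordMul_cons, Module.End.mul_apply, ih (E.shift_mem a hg) (by simp at hu; omega),
      E.ext_shift a hg (by simpa using hu)]

theorem wordMul_shift_hankelCol_nil {w : List A} (hw : w.length ≤ n / 2) :
    wordMul E.shift w (hankelCol q k []) = hankelCol q k w := by
  induction w using List.reverseRecOn with
  | nil => rfl
  | append_singleton w a ih =>
    have hw' : w.length ≤ n / 2 := by simp at hw; omega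
    rw [wordMul_concat, Module.End.mul_apply, ih hw', E.shift_hankelCol a hw']

theorem sum_shift_apply_nil [Fintype A]
    (hq : ∀ u : List A, u.length < n → q u = ∑ a, q (u ++ [a])) {g : WordsLE A k → F}
    (hg : g ∈ hankelSpan F q k k) :
    ∑ a, E.shift a g (WordsLE.nil A k) = g (WordsLE.nil A k) := by
  suffices EqOn ⇑(∑ a, LinearMap.proj (R := F) (WordsLE.nil A k) ∘ₗ E.shift a)
      (LinearMap.proj (WordsLE.nil A k)) (range fun w : WordsLE A k => hankelCol q k w.1) by
    simpa using LinearMap.eqOn_span this hg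
  rintro _ ⟨⟨w, hw⟩, rfl⟩
  have := E.two_mul_add_one_le
  simp [E.shift_hankelCol _ (hw.trans E.le_half), hankelCol, WordsLE.nil, ← hq w (by omega)]

theorem eq_wordMul_shift_apply_nil {v : List A} (hv : v.length = n) :
    q v = wordMul E.shift v (hankelCol q k []) (WordsLE.nil A k) := by
  have hmem := E.hankelCol_mem (w := v.take (n / 2)) (by simp; omega)
  rw [← List.take_append_drop (n / 2) v, wordMul_append, Module.End.mul_apply,
    E.wordMul_shift_hankelCol_nil (by simp), E.wordMul_shift_apply_nil hmem (by simp; omega),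
    E.ext_hankelCol _ (by simp)]
  simp [hankelCol]

theorem exists_matrix_realization [Fintype A] {d : ℕ} (E : FlatExtension q k n)
    (hq : ∀ u : List A, u.length < n → q u = ∑ a, q (u ++ [a]))
    (hd : finrank F (hankelSpan F q k k) ≤ d) :
    ∃ (T : A → Matrix (Fin d) (Fin d) F) (x y : Fin d → F),
      y ᵥ* ∑ a, T a = y ∧ ∀ v : List A, v.length = n → q v = y ⬝ᵥ wordProd T v *ᵥ x := by
  obtain ⟨M, x, y, hy, hM⟩ := exists_matrix_realization_of_finrank_le hd
    (fun a => (E.shift a).restrict fun _ => E.shift_mem a)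
    ⟨hankelCol q k [], E.hankelCol_mem (Nat.zero_le _)⟩
    (LinearMap.proj (WordsLE.nil A k) ∘ₗ (hankelSpan F q k k).subtype)
    (fun g => by simpa using E.sum_shift_apply_nil hq g.2)
  refine ⟨M, x, y, hy, fun v hv => ?_⟩
  rw [← hM, LinearMap.comp_apply, Submodule.subtype_apply, coe_wordMul_restrict]
  exact E.eq_wordMul_shift_apply_nil hv

end FlatExtension

end flat

section assembly

variable {A F : Type*} [Field F] {q : List A → F}

theorem hankelSpan_le_of_finrank_eq [Finite A] {k l m : ℕ} (hkm : k ≤ m) (hkl : k ≤ l)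
    (h : finrank F (hankelSpan F q m l) = finrank F (hankelSpan F q k k)) :
    hankelSpan F q k l ≤ hankelSpan F q k k :=
  (Submodule.eq_of_le_of_finrank_le (hankelSpan_mono_right q k hkl)
    ((finrank_hankelSpan_mono q hkm le_rfl).trans h.le)).ge

theorem exists_ext_hankelCol_of_finrank_eq [Finite A] {k l m : ℕ} (hkl : k ≤ l) (hkm : k ≤ m)
    (h : finrank F (hankelSpan F q l m) = finrank F (hankelSpan F q k k)) :
    ∃ ε : (WordsLE A k → F) →ₗ[F] (WordsLE A l → F),
      ∀ w : List A, w.length ≤ m → ε (hankelCol q k w) = hankelCol q l w := by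
  set f := (restrictWords hkl).domRestrict (hankelSpan F q l m)
  have hker : LinearMap.ker f = ⊥ := by
    have := LinearMap.finrank_range_add_finrank_ker f
    rw [LinearMap.range_domRestrict, map_restrictWords_hankelSpan] at this
    have := finrank_hankelSpan_mono q (le_refl k) hkm
    exact Submodule.finrank_eq_zero.1 (by omega)
  obtain ⟨g, hg⟩ := f.exists_leftInverse_of_injective hker
  refine ⟨(hankelSpan F q l m).subtype ∘ₗ g, fun w hw => ?_⟩
  have := LinearMap.congr_fun hg ⟨hankelCol q l w, hankelCol_mem_hankelSpan q hw⟩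
  simpa [f, restrictWords_hankelCol] using congrArg Subtype.val this

theorem exists_realization_iff [Fintype A] {d n : ℕ} (hd : 1 ≤ d) (hn : 2 * d - 1 ≤ n)
    (hq : ∀ u : List A, u.length < n → q u = ∑ a, q (u ++ [a])) :
    (∃ (T : A → Matrix (Fin d) (Fin d) F) (x y : Fin d → F),
        y ᵥ* ∑ a, T a = y ∧ ∀ v : List A, v.length = n → q v = y ⬝ᵥ wordProd T v *ᵥ x) ↔
      finrank F (hankelSpan F q (d - 1) (d - 1)) ≤ d ∧
        finrank F (hankelSpan F q ((n + 1) / 2) (n / 2)) =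
          finrank F (hankelSpan F q (d - 1) (d - 1)) ∧
        finrank F (hankelSpan F q (n / 2) ((n + 1) / 2)) =
          finrank F (hankelSpan F q (d - 1) (d - 1)) := by
  constructor
  · rintro ⟨T, x, y, hy, hp⟩
    obtain ⟨hle, heq⟩ := finrank_hankelSpan_of_realization hy hq hp (by omega)
    exact ⟨hle, heq _ _ (by omega) (by omega) (by omega), heq _ _ (by omega) (by omega) (by omega)⟩
  · rintro ⟨hle, hlm, hml⟩
    obtain ⟨ε, hε⟩ := exists_ext_hankelCol_of_finrank_eq (by omega) (by omega) hlm
    exact FlatExtension.exists_matrix_realization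
      ⟨by omega, hankelSpan_le_of_finrank_eq (by omega) (by omega) hml, ε, hε⟩ hq hle

end assembly

theorem stmt7_general {A : Type*} [Fintype A] (d n : ℕ)
    (hd : 1 ≤ d) (hn : 2 * d - 1 ≤ n)
    (p : List A → ℝ)
    (hext : ∀ u : List A, u.length < n →
      p u = ∑ f : Fin (n - u.length) → A, p (u ++ List.ofFn f)) :
    (∃ (T : A → Matrix (Fin d) (Fin d) ℂ) (x y : Fin d → ℂ),
        y ᵥ* (∑ a : A, T a) = y ∧
        ∀ v : List A, v.length = n → (p v : ℂ) = y ⬝ᵥ (wordProd T v) *ᵥ x) ↔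
      (hankelRank p (d - 1) (d - 1) ≤ (d : Cardinal) ∧
        hankelRank p ((n + 1) / 2) (n / 2) = hankelRank p (d - 1) (d - 1) ∧
        hankelRank p (n / 2) ((n + 1) / 2) = hankelRank p (d - 1) (d - 1)) := by
  have hq (u : List A) (hu : u.length < n) : (p u : ℂ) = ∑ a, (p (u ++ [a]) : ℂ) := by
    exact_mod_cast eq_sum_append_singleton hext hu
  have hrank (s t : ℕ) : hankelRank p s t = finrank ℂ (hankelSpan ℂ (fun u => (p u : ℂ)) s t) := by
    rw [hankelRank_eq_finrank, ← finrank_hankelSpan_algebraMap_comp p ℂ]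
    rfl
  simp only [hrank, Nat.cast_le, Nat.cast_inj]
  exact exists_realization_iff hd hn hq

/-- For `d ≥ 1`, `n ≥ 2d−1` and a nonnegative family `(p(v))_{v ∈ Σⁿ}`,
extended to shorter strings by `p(u) = ∑_{v ∈ Σ^{n−|u|}} p(uv)`: the distribution lies in
the image of the `d`-dimensional model `𝐠_{n,d}` (complex parameterizations with
`yᵀ(∑_a T_a) = yᵀ`) iff (a) `rank 𝒫_{p,d−1,d−1} ≤ d` and
(b) `rank 𝒫_{p,⌈n/2⌉,⌊n/2⌋} = rank 𝒫_{p,⌊n/2⌋,⌈n/2⌉} = rank 𝒫_{p,d−1,d−1}`. -/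
theorem stmt7 {A : Type*} [Fintype A] [Nonempty A] (d n : ℕ)
    (hd : 1 ≤ d) (hn : 2 * d - 1 ≤ n)
    (p : List A → ℝ)
    (hnonneg : ∀ v : List A, v.length = n → 0 ≤ p v)
    (hext : ∀ u : List A, u.length < n →
      p u = ∑ f : Fin (n - u.length) → A, p (u ++ List.ofFn f)) :
    (∃ (T : A → Matrix (Fin d) (Fin d) ℂ) (x y : Fin d → ℂ),
        y ᵥ* (∑ a : A, T a) = y ∧
        ∀ v : List A, v.length = n → (p v : ℂ) = y ⬝ᵥ (wordProd T v) *ᵥ x) ↔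
      (hankelRank p (d - 1) (d - 1) ≤ (d : Cardinal) ∧
        hankelRank p ((n + 1) / 2) (n / 2) = hankelRank p (d - 1) (d - 1) ∧
        hankelRank p (n / 2) ((n + 1) / 2) = hankelRank p (d - 1) (d - 1)) :=
  stmt7_general d n hd hn p hext
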